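/- (de Finetti representation of the Curie-Weiss measure) Let β > 0, M ∈ ℕ, and let ℙ_β^M be the Curie-Weiss measure on {−1,1}^M, i.e. ℙ_β^M(x_1,…,x_M) = Z_{β,M}^{−1}·e^{(β/(2M))·(∑_{i=1}^M x_i)²} with normalizing constant Z_{β,M}. Then for every function φ : {−1,1}^M → ℝ, E_{ℙ_β^M}(φ) = Z^{−1} ∫_{−1}^{1} E_t(φ) · e^{−M·F_β(t)/2}·(1−t²)^{−1} dt, where Z := ∫_{−1}^{1} e^{−M·F_β(t)/2}·(1−t²)^{−1} dt and E_t denotes expectation with respect to the product measure P_t^{(M)}. -/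

import Mathlib

open MeasureTheory

/-- The function `F_β`. -/
noncomputable def Fbeta (β t : ℝ) : ℝ :=
  1 / β * (1 / 2 * Real.log ((1 + t) / (1 - t))) ^ 2 + Real.log (1 - t ^ 2)

/-- The spin value `±1` associated with a Boolean. -/
def sgn (b : Bool) : ℝ := if b then 1 else -1

open Real Set

/-! The Gaussian identity `exp (β S² / (2M)) ∝ ∫ exp (u S - M u² / (2β)) du`
(Hubbard–Stratonovich) linearises the Curie–Weiss weight in the magnetisation `S = ∑ xᵢ`.
Substituting `u = artanh t`, so that `du = dt / (1 - t²)` and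
`2⁻ᴹ exp (u S) (1 - t²)^(M/2) = P_t^{(M)}(x)`, rewrites the integral as
`∫ P_t^{(M)}(x) e^{-M F_β(t)/2} (1 - t²)⁻¹ dt` up to a factor independent of `x`.
Summing against `φ`, and against `1` for the normalisation (`P_t^{(M)}` is a probability),
that factor cancels. -/

/-- `P_t^{(1)}({sgn b})`. -/
noncomputable abbrev spinProb (t : ℝ) (b : Bool) : ℝ := if b then (1 + t) / 2 else (1 - t) / 2

noncomputable abbrev deFinettiDensity (β : ℝ) (n : ℕ) (t : ℝ) : ℝ :=
  exp (-(n * Fbeta β t) / 2) / (1 - t ^ 2)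

theorem Real.hasDerivAt_artanh {t : ℝ} (ht : t ∈ Ioo (-1 : ℝ) 1) :
    HasDerivAt artanh (1 - t ^ 2)⁻¹ t := by
  have h1 : 0 < 1 + t := by linarith [ht.1]
  have h2 : 0 < 1 - t := by linarith [ht.2]
  have hlog := ((((hasDerivAt_id t).const_add 1).log h1.ne').sub
    (((hasDerivAt_id t).const_sub 1).log h2.ne')).const_mul (1 / 2 : ℝ)
  refine (hlog.congr_of_eventuallyEq ?_).congr_deriv ?_
  · filter_upwards [isOpen_Ioo.mem_nhds ht] with y hy
    rw [artanh_eq_half_log (Ioo_subset_Icc_self hy),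
      log_div (by linarith [hy.1]) (by linarith [hy.2])]
    rfl
  · rw [show 1 - t ^ 2 = (1 + t) * (1 - t) by ring, id]
    field_simp
    ring

theorem Fbeta_eq_artanh {β t : ℝ} (ht : t ∈ Ioo (-1 : ℝ) 1) :
    Fbeta β t = artanh t ^ 2 / β + log (1 - t ^ 2) := by
  rw [Fbeta, artanh_eq_half_log (Ioo_subset_Icc_self ht)]
  ring

section ChangeOfVariables

variable {E : Type*} [NormedAddCommGroup E] [NormedSpace ℝ E]

theorem eqOn_abs_deriv_artanh_smul (g : ℝ → E) :
    EqOn (fun t => |(1 - t ^ 2)⁻¹| • g (artanh t)) (fun t => (1 - t ^ 2)⁻¹ • g (artanh t))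
      (Ioo (-1) 1) := fun t ht => by
  have : 0 < 1 - t ^ 2 := by nlinarith [ht.1, ht.2]
  simp only [abs_of_pos (inv_pos.2 this)]

theorem integrableOn_Ioo_smul_comp_artanh_iff (g : ℝ → E) :
    IntegrableOn (fun t => (1 - t ^ 2)⁻¹ • g (artanh t)) (Ioo (-1) 1) ↔ Integrable g := by
  rw [← integrableOn_univ, ← artanh_bijOn.image_eq,
    integrableOn_image_iff_integrableOn_abs_deriv_smul measurableSet_Ioo
      (fun t ht => (hasDerivAt_artanh ht).hasDerivWithinAt) artanh_injOn]
  exact integrableOn_congr_fun (eqOn_abs_deriv_artanh_smul g).symm measurableSet_Ioo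

theorem integral_Ioo_smul_comp_artanh (g : ℝ → E) :
    ∫ t in Ioo (-1 : ℝ) 1, (1 - t ^ 2)⁻¹ • g (artanh t) = ∫ u, g u := by
  calc _ = ∫ t in Ioo (-1 : ℝ) 1, |(1 - t ^ 2)⁻¹| • g (artanh t) :=
        setIntegral_congr_fun measurableSet_Ioo (eqOn_abs_deriv_artanh_smul g).symm
    _ = ∫ u in artanh '' Ioo (-1) 1, g u :=
        (integral_image_eq_integral_abs_deriv_smul measurableSet_Ioo
          (fun t ht => (hasDerivAt_artanh ht).hasDerivWithinAt) artanh_injOn g).symm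
    _ = ∫ u, g u := by rw [artanh_bijOn.image_eq, setIntegral_univ]

end ChangeOfVariables

section GaussianLinearization

variable {a : ℝ}

theorem exp_mul_sub_mul_sq_eq (ha : a ≠ 0) (s u : ℝ) :
    exp (s * u - a * u ^ 2) = exp (s ^ 2 / (4 * a)) * exp (-a * (u - s / (2 * a)) ^ 2) := by
  rw [← exp_add]
  congr 1
  field_simp
  ring

theorem integrable_exp_mul_sub_mul_sq (ha : 0 < a) (s : ℝ) :
    Integrable fun u => exp (s * u - a * u ^ 2) := by
  simp_rw [exp_mul_sub_mul_sq_eq ha.ne' s]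
  exact ((integrable_exp_neg_mul_sq ha).comp_sub_right _).const_mul _

theorem integral_exp_mul_sub_mul_sq (ha : 0 < a) (s : ℝ) :
    ∫ u, exp (s * u - a * u ^ 2) = √(π / a) * exp (s ^ 2 / (4 * a)) := by
  simp_rw [exp_mul_sub_mul_sq_eq ha.ne' s]
  rw [integral_const_mul, integral_sub_right_eq_self (fun u => exp (-a * u ^ 2)),
    integral_gaussian, mul_comm]

end GaussianLinearization

section Spins

variable {ι : Type*} [Fintype ι]

theorem sum_spinProb_eq_one (t : ℝ) : ∑ b, spinProb t b = 1 := by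
  simp only [spinProb, Fintype.sum_bool, if_true, Bool.false_eq_true, if_false]
  ring

theorem sum_prod_spinProb_eq_one [DecidableEq ι] (t : ℝ) :
    ∑ x : ι → Bool, ∏ i, spinProb t (x i) = 1 := by
  rw [← Fintype.prod_sum fun _ => spinProb t]
  simp only [sum_spinProb_eq_one, Finset.prod_const_one]

theorem spinProb_eq_exp {t : ℝ} (ht : t ∈ Ioo (-1 : ℝ) 1) (b : Bool) :
    spinProb t b =
      exp (sgn b * artanh t + log (1 - t ^ 2) / 2) / 2 := by
  have h1 : 0 < 1 + t := by linarith [ht.1]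
  have h2 : 0 < 1 - t := by linarith [ht.2]
  rw [artanh_eq_half_log (Ioo_subset_Icc_self ht), log_div h1.ne' h2.ne',
    show 1 - t ^ 2 = (1 + t) * (1 - t) by ring, log_mul h1.ne' h2.ne']
  cases b
  · simp only [spinProb, sgn, Bool.false_eq_true, if_false]
    rw [show -1 * (1 / 2 * (log (1 + t) - log (1 - t))) + (log (1 + t) + log (1 - t)) / 2 =
      log (1 - t) by ring, exp_log h2]
  · simp only [spinProb, sgn, if_true]
    rw [show 1 * (1 / 2 * (log (1 + t) - log (1 - t))) + (log (1 + t) + log (1 - t)) / 2 =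
      log (1 + t) by ring, exp_log h1]

theorem prod_spinProb_eq_exp {t : ℝ} (ht : t ∈ Ioo (-1 : ℝ) 1) (x : ι → Bool) :
    ∏ i, spinProb t (x i) =
      exp ((∑ i, sgn (x i)) * artanh t + Fintype.card ι * log (1 - t ^ 2) / 2) /
        2 ^ Fintype.card ι := by
  simp_rw [spinProb_eq_exp ht, Finset.prod_div_distrib, ← exp_sum, Finset.sum_add_distrib,
    ← Finset.sum_mul, Finset.prod_const, Finset.sum_const, Finset.card_univ, nsmul_eq_mul]
  rw [mul_div_assoc]

end Spins

theorem integral_sum_mul_div_integral_eq {α ι : Type*} [MeasurableSpace α] [Fintype ι]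
    {μ : Measure α} {P : ι → α → ℝ} {w : α → ℝ} {c : ι → ℝ} {C : ℝ}
    (hP : ∀ t, ∑ x, P x t = 1) (hint : ∀ x, Integrable (fun t => P x t * w t) μ)
    (hval : ∀ x, ∫ t, P x t * w t ∂μ = C * c x) (hC : C ≠ 0) (f : ι → ℝ) :
    (∫ t, (∑ x, P x t * f x) * w t ∂μ) / ∫ t, w t ∂μ =
      (∑ x, c x * f x) / ∑ x, c x := by
  have hnum : ∫ t, (∑ x, P x t * f x) * w t ∂μ = C * ∑ x, c x * f x := by
    simp_rw [Finset.sum_mul, mul_right_comm _ (f _)]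
    rw [integral_finsetSum _ fun x _ => (hint x).mul_const _, Finset.mul_sum]
    simp_rw [integral_mul_const, hval, mul_assoc]
  have hden : ∫ t, w t ∂μ = C * ∑ x, c x := by
    have hw : w = fun t => ∑ x, P x t * w t :=
      funext fun t => by rw [← Finset.sum_mul, hP, one_mul]
    rw [hw, integral_finsetSum _ fun x _ => hint x, Finset.mul_sum]
    simp_rw [hval]
  rw [hnum, hden, mul_div_mul_left _ _ hC]

section CurieWeiss

variable {β : ℝ} {n : ℕ}

theorem prod_spinProb_mul_deFinettiDensity_eq {t : ℝ} (ht : t ∈ Ioo (-1 : ℝ) 1)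
    (x : Fin n → Bool) :
    (∏ i, spinProb t (x i)) * deFinettiDensity β n t =
      (1 - t ^ 2)⁻¹ •
        (exp ((∑ i, sgn (x i)) * artanh t - n / (2 * β) * artanh t ^ 2) / 2 ^ n) := by
  rw [prod_spinProb_eq_exp ht, Fintype.card_fin, deFinettiDensity, Fbeta_eq_artanh ht,
    smul_eq_mul]
  set S := ∑ i, sgn (x i)
  set L := log (1 - t ^ 2)
  have hexp : exp (S * artanh t + n * L / 2) * exp (-(n * (artanh t ^ 2 / β + L)) / 2) =
      exp (S * artanh t - n / (2 * β) * artanh t ^ 2) := by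
    rw [← exp_add]
    ring_nf
  rw [← hexp]
  ring

theorem integrableOn_prod_spinProb_mul_deFinettiDensity (hβ : 0 < β) (hn : 0 < n)
    (x : Fin n → Bool) :
    IntegrableOn (fun t => (∏ i, spinProb t (x i)) * deFinettiDensity β n t) (Ioo (-1) 1) := by
  refine ((integrableOn_Ioo_smul_comp_artanh_iff
    fun u => exp ((∑ i, sgn (x i)) * u - n / (2 * β) * u ^ 2) / 2 ^ n).2 ?_).congr_fun
    (fun t ht => (prod_spinProb_mul_deFinettiDensity_eq ht x).symm) measurableSet_Ioo
  exact (integrable_exp_mul_sub_mul_sq (by positivity) _).div_const _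

theorem integral_prod_spinProb_mul_deFinettiDensity (hβ : 0 < β) (hn : 0 < n)
    (x : Fin n → Bool) :
    ∫ t in Ioo (-1 : ℝ) 1, (∏ i, spinProb t (x i)) * deFinettiDensity β n t =
      √(π / (n / (2 * β))) / 2 ^ n * exp (β / (2 * n) * (∑ i, sgn (x i)) ^ 2) := by
  rw [setIntegral_congr_fun measurableSet_Ioo
      (fun t ht => prod_spinProb_mul_deFinettiDensity_eq ht x),
    integral_Ioo_smul_comp_artanh
      fun u => exp ((∑ i, sgn (x i)) * u - n / (2 * β) * u ^ 2) / 2 ^ n,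
    integral_div, integral_exp_mul_sub_mul_sq (by positivity)]
  field_simp
  ring_nf

end CurieWeiss

/-- de Finetti representation of the Curie-Weiss measure: for every `φ : {-1,1}^M → ℝ`,
`E_{ℙ_β^M}(φ) = Z⁻¹ ∫_{-1}^1 E_t(φ) e^{-M F_β(t)/2} (1-t²)^{-1} dt`, where
`E_t` is the expectation with respect to the product measure `P_t^{(M)}` and
`Z = ∫_{-1}^1 e^{-M F_β(t)/2} (1-t²)^{-1} dt`. -/
theorem de_finetti_curie_weiss (β : ℝ) (hβ : 0 < β) (M : ℕ) (hM : 1 ≤ M)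
    (φ : (Fin M → ℝ) → ℝ) :
    (∑ x : Fin M → Bool,
          Real.exp (β / (2 * M) * (∑ i, sgn (x i)) ^ 2) * φ (fun i => sgn (x i))) /
        (∑ x : Fin M → Bool, Real.exp (β / (2 * M) * (∑ i, sgn (x i)) ^ 2)) =
      (∫ t in Set.Ioo (-1 : ℝ) 1,
          (∑ x : Fin M → Bool,
              (∏ i, if x i then (1 + t) / 2 else (1 - t) / 2) * φ (fun i => sgn (x i))) *
            (Real.exp (-(M * Fbeta β t) / 2) / (1 - t ^ 2))) /
        (∫ t in Set.Ioo (-1 : ℝ) 1, Real.exp (-(M * Fbeta β t) / 2) / (1 - t ^ 2)) := by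
  have hC : √(π / (M / (2 * β))) / 2 ^ M ≠ 0 := by
    have : 0 < (M : ℝ) := by exact_mod_cast hM
    positivity
  exact (integral_sum_mul_div_integral_eq sum_prod_spinProb_eq_one
    (integrableOn_prod_spinProb_mul_deFinettiDensity hβ hM)
    (integral_prod_spinProb_mul_deFinettiDensity hβ hM) hC _).symm
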